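/- b_n is rational if and only if the Euler-Gompertz constant G = e·E_1(1) is rational, for any fixed n ≥ 0. -/

import Mathlib

/-!
With `u = 1 / (1 - x)`, the function `f x = e^u E₁(u)` satisfies `(1 - x)² (f' + 1 / (1 - x)) = f`,
because `(e^u E₁(u))' = e^u E₁(u) - 1 / u`. Comparing coefficients gives `b₁ = b₀ - 1`,
`2 b₂ = 3 b₁ + 1` and `(m + 3) b_{m+3} = (2m + 5) b_{m+2} - (m + 1) b_{m+1}`, while `b₀ = f 0 = G`.
Hence `bₙ = aₙ G - a'ₙ`, where `aₙ` and `a'ₙ` are the rational solutions of the same recurrence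
with initial values `(1, 1, 3/2)` and `(0, 1, 1)`. The recurrence keeps `aₙ` positive and
nondecreasing from `n = 1` on, so `aₙ ≠ 0` and `bₙ` is rational exactly when `G` is.
-/

noncomputable def E1 (x : ℝ) : ℝ := ∫ t in Set.Ioi x, Real.exp (-t) / t

open Set MeasureTheory FormalMultilinearSeries
open scoped ENNReal

theorem integrableOn_exp_neg_div_Ioi {a : ℝ} (ha : 0 < a) :
    IntegrableOn (fun t => Real.exp (-t) / t) (Ioi a) := by
  refine ((integrableOn_exp_neg_Ioi a).div_const a).mono' ?_ ?_
  · exact ((Real.continuous_exp.comp continuous_neg).continuousOn.div continuousOn_id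
      fun t ht => (ha.trans ht).ne').aestronglyMeasurable measurableSet_Ioi
  · filter_upwards [ae_restrict_mem measurableSet_Ioi] with t ht
    rw [Real.norm_of_nonneg (div_nonneg (Real.exp_pos _).le (ha.trans ht).le)]
    exact div_le_div_of_nonneg_left (Real.exp_pos _).le ha (le_of_lt ht)

theorem hasDerivAt_E1 {y : ℝ} (hy : 0 < y) : HasDerivAt E1 (-(Real.exp (-y) / y)) y := by
  have ha : 0 < y / 2 := half_pos hy
  have hay : y / 2 < y := half_lt_self hy
  have hcont : ContinuousOn (fun t => Real.exp (-t) / t) (Ioi (y / 2)) :=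
    (Real.continuous_exp.comp continuous_neg).continuousOn.div continuousOn_id
      fun t ht => (ha.trans ht).ne'
  have hint : IntervalIntegrable (fun t => Real.exp (-t) / t) volume (y / 2) y :=
    (intervalIntegrable_iff_integrableOn_Ioc_of_le hay.le).2
      ((integrableOn_exp_neg_div_Ioi ha).mono_set Ioc_subset_Ioi_self)
  have hFTC := (intervalIntegral.integral_hasDerivAt_right hint
    (hcont.stronglyMeasurableAtFilter isOpen_Ioi y hay)
    (hcont.continuousAt (isOpen_Ioi.mem_nhds hay))).const_sub (E1 (y / 2))
  refine hFTC.congr_of_eventuallyEq ?_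
  filter_upwards [isOpen_Ioi.mem_nhds hay] with z (hz : y / 2 < z)
  rw [E1, E1, ← intervalIntegral.integral_interval_add_Ioi (integrableOn_exp_neg_div_Ioi ha)
    ((integrableOn_exp_neg_div_Ioi ha).mono_set (Ioi_subset_Ioi hz.le)), add_sub_cancel_left]

theorem hasDerivAt_exp_mul_E1 {y : ℝ} (hy : 0 < y) :
    HasDerivAt (fun t => Real.exp t * E1 t) (Real.exp y * E1 y - 1 / y) y := by
  refine ((Real.hasDerivAt_exp y).mul (hasDerivAt_E1 hy)).congr_deriv ?_
  rw [mul_neg, ← mul_div_assoc, ← Real.exp_add, add_neg_cancel, Real.exp_zero, sub_eq_add_neg]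

noncomputable def gompertzGF (x : ℝ) : ℝ := Real.exp (1 / (1 - x)) * E1 (1 / (1 - x))

theorem hasDerivAt_gompertzGF {x : ℝ} (hx : x < 1) :
    HasDerivAt gompertzGF ((1 / (1 - x)) ^ 2 * gompertzGF x - 1 / (1 - x)) x := by
  have hx' : 1 - x ≠ 0 := (sub_pos.2 hx).ne'
  have hu : HasDerivAt (fun z : ℝ => 1 / (1 - z)) ((1 / (1 - x)) ^ 2) x := by
    simp only [one_div]
    refine (((hasDerivAt_id x).const_sub 1).inv hx').congr_deriv ?_
    simp [inv_pow]
  refine ((hasDerivAt_exp_mul_E1 (one_div_pos.2 (sub_pos.2 hx))).comp x hu).congr_deriv ?_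
  simp only [gompertzGF]
  field_simp

section PowerSeries

variable {c c' : ℕ → ℝ} {f : ℝ → ℝ} {r : ℝ≥0∞}

theorem le_radius_ofScalars_of_summable
    (h : ∀ x : ℝ, ‖x‖ₑ < r → Summable fun n => c n * x ^ n) : r ≤ (ofScalars ℝ c).radius := by
  refine ENNReal.le_of_forall_nnreal_lt fun ρ hρ => (ofScalars ℝ c).le_radius_of_tendsto
    (l := 0) ?_
  have hs := (h ρ (by simpa using hρ)).tendsto_atTop_zero.norm
  simpa [ofScalars_norm, abs_of_nonneg ρ.coe_nonneg] using hs

theorem hasFPowerSeriesOnBall_ofScalars_of_hasSum (hr : 0 < r)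
    (h : ∀ x : ℝ, ‖x‖ₑ < r → HasSum (fun n => c n * x ^ n) (f x)) :
    HasFPowerSeriesOnBall f (ofScalars ℝ c) 0 r where
  r_le := le_radius_ofScalars_of_summable fun x hx => (h x hx).summable
  r_pos := hr
  hasSum {y} hy := by
    simpa [ofScalars_apply_eq, mul_comm] using h y (by simpa using hy)

theorem eq_of_forall_hasSum_mul_pow (hr : 0 < r)
    (h : ∀ x : ℝ, ‖x‖ₑ < r → HasSum (fun n => c n * x ^ n) (f x))
    (h' : ∀ x : ℝ, ‖x‖ₑ < r → HasSum (fun n => c' n * x ^ n) (f x)) : c = c' :=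
  ofScalars_series_injective ℝ ℝ <|
    (hasFPowerSeriesOnBall_ofScalars_of_hasSum hr h).hasFPowerSeriesAt.eq_formalMultilinearSeries
      (hasFPowerSeriesOnBall_ofScalars_of_hasSum hr h').hasFPowerSeriesAt

theorem HasFPowerSeriesOnBall.hasSum_deriv_ofScalars
    (hf : HasFPowerSeriesOnBall f (ofScalars ℝ c) 0 r) {y : ℝ} (hy : ‖y‖ₑ < r) :
    HasSum (fun n => (n + 1) * c (n + 1) * y ^ n) (deriv f y) := by
  have hsum := (hf.fderiv.hasSum (y := y) (by simpa using hy)).mapL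
    (ContinuousLinearMap.apply ℝ ℝ 1)
  have hterm (n : ℕ) : ContinuousLinearMap.apply ℝ ℝ 1 ((ofScalars ℝ c).derivSeries n fun _ => y)
      = (n + 1) * c (n + 1) * y ^ n := by
    rw [ContinuousLinearMap.apply_apply, apply_eq_pow_smul_coeff, _root_.smul_apply,
      derivSeries_coeff_one, coeff_ofScalars, nsmul_eq_mul, smul_eq_mul]
    push_cast
    ring
  simpa only [hterm, zero_add, ContinuousLinearMap.apply_apply, fderiv_apply_one_eq_deriv]
    using hsum

def mulXCoeff (c : ℕ → ℝ) : ℕ → ℝ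
  | 0 => 0
  | n + 1 => c n

theorem HasSum.mulXCoeff {x S : ℝ} (h : HasSum (fun n => c n * x ^ n) S) :
    HasSum (fun n => mulXCoeff c n * x ^ n) (x * S) := by
  refine (hasSum_nat_add_iff' 1).mp ?_
  simpa [_root_.mulXCoeff, pow_succ, mul_left_comm, mul_comm] using h.mul_left x

end PowerSeries

theorem gompertzGF_coeff_recurrence {b : ℕ → ℝ}
    (hb : ∀ x : ℝ, |x| < 1 → HasSum (fun n => b n * x ^ n) (gompertzGF x)) :
    b 1 = b 0 - 1 ∧ 2 * b 2 = 3 * b 1 + 1 ∧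
      ∀ m : ℕ, (m + 3) * b (m + 3) = (2 * m + 5) * b (m + 2) - (m + 1) * b (m + 1) := by
  have habs (x : ℝ) (hx : ‖x‖ₑ < 1) : |x| < 1 := by simpa [Real.enorm_eq_ofReal_abs] using hx
  have hb' (x : ℝ) (hx : ‖x‖ₑ < 1) : HasSum (fun n => b n * x ^ n) (gompertzGF x) :=
    hb x (habs x hx)
  set D : ℕ → ℝ := fun n => (n + 1) * b (n + 1) + 1 with hD
  have hDsum (x : ℝ) (hx : ‖x‖ₑ < 1) :
      HasSum (fun n => D n * x ^ n) ((1 / (1 - x)) ^ 2 * gompertzGF x) := by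
    have hderiv := (hasFPowerSeriesOnBall_ofScalars_of_hasSum one_pos hb').hasSum_deriv_ofScalars hx
    rw [(hasDerivAt_gompertzGF (lt_of_abs_lt (habs x hx))).deriv] at hderiv
    simpa [hD, add_mul] using hderiv.add (hasSum_geometric_of_abs_lt_one (habs x hx))
  have hode : b = fun n => D n - 2 * mulXCoeff D n + mulXCoeff (mulXCoeff D) n := by
    refine eq_of_forall_hasSum_mul_pow one_pos hb' fun x hx => ?_
    have hx1 : 1 - x ≠ 0 := (sub_pos.2 (lt_of_abs_lt (habs x hx))).ne'
    have h := hDsum x hx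
    have hval : (1 / (1 - x)) ^ 2 * gompertzGF x - 2 * (x * ((1 / (1 - x)) ^ 2 * gompertzGF x))
        + x * (x * ((1 / (1 - x)) ^ 2 * gompertzGF x)) = gompertzGF x := by
      field_simp
      ring
    simpa only [hval, sub_mul, add_mul, mul_assoc] using
      (h.sub (h.mulXCoeff.mul_left 2)).add h.mulXCoeff.mulXCoeff
  refine ⟨?_, ?_, fun m => ?_⟩
  · have := congrFun hode 0
    simp only [hD, CharP.cast_eq_zero, zero_add, one_mul, mulXCoeff, mul_zero, sub_zero, add_zero] at this
    linarith
  · have := congrFun hode 1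
    simp only [hD, Nat.cast_one, Nat.reduceAdd, mulXCoeff, CharP.cast_eq_zero, zero_add, one_mul,
      add_zero] at this
    linarith
  · have := congrFun hode (m + 2)
    simp only [hD, Nat.cast_add, Nat.cast_ofNat, mulXCoeff, Nat.cast_one] at this
    linarith

def gompertzRec (x₀ x₁ x₂ : ℚ) : ℕ → ℚ
  | 0 => x₀
  | 1 => x₁
  | 2 => x₂
  | m + 3 => ((2 * m + 5) * gompertzRec x₀ x₁ x₂ (m + 2)
      - (m + 1) * gompertzRec x₀ x₁ x₂ (m + 1)) / (m + 3)

theorem gompertzRec_succ_pos {x₀ x₁ x₂ : ℚ} (h₁ : 0 < x₁) (h₁₂ : x₁ ≤ x₂) (n : ℕ) :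
    0 < gompertzRec x₀ x₁ x₂ (n + 1) := by
  suffices ∀ n, 0 < gompertzRec x₀ x₁ x₂ (n + 1) ∧
      gompertzRec x₀ x₁ x₂ (n + 1) ≤ gompertzRec x₀ x₁ x₂ (n + 2) from (this n).1
  intro n
  induction n with
  | zero => exact ⟨h₁, h₁₂⟩
  | succ m ih =>
    obtain ⟨hpos, hle⟩ := ih
    refine ⟨hpos.trans_le hle, ?_⟩
    rw [gompertzRec, le_div_iff₀ (by positivity)]
    nlinarith

theorem eq_gompertzRec_mul_sub {b : ℕ → ℝ}
    (hb : ∀ x : ℝ, |x| < 1 → HasSum (fun n => b n * x ^ n) (gompertzGF x)) :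
    ∀ n, b n = gompertzRec 1 1 (3 / 2) n * (Real.exp 1 * E1 1) - gompertzRec 0 1 1 n := by
  obtain ⟨h₁, h₂, hrec⟩ := gompertzGF_coeff_recurrence hb
  have h₀ : b 0 = Real.exp 1 * E1 1 := by
    simpa [gompertzGF] using (hasSum_single 0 fun n hn => by simp [hn]).unique (hb 0 (by simp))
  intro n
  induction n using Nat.strong_induction_on with
  | _ n ih =>
  match n, ih with
  | 0, _ => simp [gompertzRec, h₀]
  | 1, _ => simp [gompertzRec, h₁, h₀]
  | 2, _ =>
    simp only [gompertzRec, Rat.cast_div, Rat.cast_ofNat, Rat.cast_one]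
    linarith
  | m + 3, ih =>
    have hm : (m : ℝ) + 3 ≠ 0 := by positivity
    rw [← mul_right_inj' hm, hrec, ih (m + 2) (by omega), ih (m + 1) (by omega)]
    simp only [gompertzRec]
    push_cast
    field_simp
    ring

theorem exists_rat_eq_iff_of_eq_mul_sub {x y : ℝ} {a a' : ℚ} (ha : a ≠ 0) (h : x = a * y - a') :
    (∃ q : ℚ, x = q) ↔ ∃ q : ℚ, y = q := by
  constructor
  · rintro ⟨q, rfl⟩
    exact ⟨(q + a') / a, by push_cast; field_simp; linarith⟩
  · rintro ⟨q, rfl⟩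
    exact ⟨a * q - a', by push_cast; exact h⟩

/-- For any fixed `n ≥ 0`, the coefficient `bₙ` of `exp(1/(1-z)) E₁(1/(1-z))` is
rational if and only if the Euler–Gompertz constant `G = e·E₁(1)` is rational. -/
theorem stmt_11 (b : ℕ → ℝ)
    (hb : ∀ x : ℝ, |x| < 1 → HasSum (fun n => b n * x ^ n)
      (Real.exp (1 / (1 - x)) * E1 (1 / (1 - x)))) :
    ∀ n : ℕ, (∃ q : ℚ, b n = (q : ℝ)) ↔ ∃ q : ℚ, Real.exp 1 * E1 1 = (q : ℝ) := by
  intro n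
  have ha : gompertzRec 1 1 (3 / 2) n ≠ 0 := by
    cases n with
    | zero => simp [gompertzRec]
    | succ m => exact (gompertzRec_succ_pos one_pos (by norm_num) m).ne'
  exact exists_rat_eq_iff_of_eq_mul_sub ha (eq_gompertzRec_mul_sub hb n)
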